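/- The substitution map sending p_T to p̃_{T,χ}(v) := P_T(…, v_{σ0}, …) − P_T(…, v_{σ1}, …) is injective on the linear span of the p_T; i.e., the polynomials p̃_{T,χ}(v), as T ranges over the (2^g+1)(2^{g−1}+1)/3 subgroups of (ℤ/2ℤ)^g of order at most 4, are linearly independent in ℂ[v_τ : τ ∈ (ℤ/2ℤ)^{g+1}]. -/
import Mathlib


open MvPolynomial

/-- The group `(ℤ/2ℤ)^g`. -/
abbrev Vg (g : ℕ) : Type := Fin g → ZMod 2

instance (g : ℕ) : Finite (AddSubgroup (Vg g)) :=
  Finite.of_injective (fun T => (T : Set (Vg g))) SetLike.coe_injective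

/-- The subgroups of `(ℤ/2ℤ)^g` of order at most four; these index the variables `p_T`. -/
abbrev SmallSubgroup (g : ℕ) : Type := {T : AddSubgroup (Vg g) // Nat.card T ≤ 4}

noncomputable instance (g : ℕ) : Fintype (SmallSubgroup g) := Fintype.ofFinite _

/-- For a subgroup `T = {0, α, β, α+β}` of order at most `4`, the Heisenberg-invariant
quartic `P_T := ∑_ρ x_ρ x_{ρ+α} x_{ρ+β} x_{ρ+α+β}`, written intrinsically as
`∑_ρ (∏_{t ∈ T} x_{ρ+t})^{4/|T|}`. -/
noncomputable def PT {g : ℕ} (T : AddSubgroup (Vg g)) : MvPolynomial (Vg g) ℂ :=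
  letI := Classical.decPred (fun t : Vg g => t ∈ T)
  ∑ ρ : Vg g,
    (∏ t ∈ Finset.univ.filter (fun t : Vg g => t ∈ T), X (ρ + t)) ^ (4 / Nat.card T)

/-- `p̃_{T,χ}(v) := P_T(…, v_{σ0}, …) − P_T(…, v_{σ1}, …)`, a quartic in the `2^{g+1}`
variables `v_τ`, `τ ∈ (ℤ/2ℤ)^{g+1}`. -/
noncomputable def ptilde {g : ℕ} (T : AddSubgroup (Vg g)) : MvPolynomial (Vg (g + 1)) ℂ :=
  rename (fun σ : Vg g => Fin.snoc σ (0 : ZMod 2)) (PT T)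
    - rename (fun σ : Vg g => Fin.snoc σ (1 : ZMod 2)) (PT T)

-- auxiliary

lemma Vg.add_self {g : ℕ} (x : Vg g) : x + x = 0 := by
  funext i
  have : ∀ a : ZMod 2, a + a = 0 := by decide
  exact this (x i)

noncomputable def DD {g : ℕ} (T : AddSubgroup (Vg g)) (ρ : Vg g) : Vg g →₀ ℕ :=
  letI := Classical.decPred (fun t : Vg g => t ∈ T)
  (4 / Nat.card T) •
    ∑ t ∈ Finset.univ.filter (fun t : Vg g => t ∈ T), Finsupp.single (ρ + t) 1

lemma DD_apply {g : ℕ} (T : AddSubgroup (Vg g)) (ρ x : Vg g) :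
    letI := Classical.decPred (fun t : Vg g => t ∈ T)
    DD T ρ x = (4 / Nat.card T) * (if x + ρ ∈ T then 1 else 0) := by
  classical
  have hsum : (∑ t ∈ Finset.univ.filter (fun t : Vg g => t ∈ T),
      Finsupp.single (ρ + t) 1) x = (if x + ρ ∈ T then 1 else 0) := by
    rw [Finsupp.finset_sum_apply]
    have key : ∀ t : Vg g, (Finsupp.single (ρ + t) (1:ℕ)) x = if t = x + ρ then 1 else 0 := by
      intro t
      rw [Finsupp.single_apply]
      congr 1
      apply propext
      constructor
      · rintro rfl
        rw [add_comm (ρ + t) ρ, ← add_assoc, Vg.add_self, zero_add]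
      · rintro rfl
        rw [add_comm x ρ, ← add_assoc, Vg.add_self, zero_add]
    simp only [key]
    rw [Finset.sum_ite_eq' (Finset.univ.filter (fun t : Vg g => t ∈ T)) (x + ρ) (fun _ => 1)]
    simp
  simp only [DD, Finsupp.smul_apply, smul_eq_mul]
  rw [hsum]

lemma kpos {g : ℕ} {T : AddSubgroup (Vg g)} (hT : Nat.card T ≤ 4) : 0 < 4 / Nat.card T :=
  Nat.div_pos hT Nat.card_pos

lemma DD_eq_iff {g : ℕ} {T T' : AddSubgroup (Vg g)} (hT : Nat.card T ≤ 4)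
    (hT' : Nat.card T' ≤ 4) (ρ : Vg g) :
    DD T' ρ = DD T 0 ↔ (T' = T ∧ ρ ∈ T) := by
  classical
  constructor
  · intro h
    have happ : ∀ x, (4 / Nat.card T') * (if x + ρ ∈ T' then 1 else 0)
        = (4 / Nat.card T) * (if x ∈ T then 1 else 0) := by
      intro x
      have := congrFun (congrArg (↑· : (Vg g →₀ ℕ) → Vg g → ℕ) h) x
      simpa [DD_apply] using this
    have hρ : ρ ∈ T := by
      by_contra hρ
      have := happ ρ
      rw [Vg.add_self, if_pos T'.zero_mem, if_neg hρ, mul_one, mul_zero] at this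
      exact absurd this (kpos hT').ne'
    have hρT : ρ ∈ T := hρ
    have hk : 4 / Nat.card T' = 4 / Nat.card T := by
      have := happ ρ
      rwa [Vg.add_self, if_pos T'.zero_mem, if_pos hρ, mul_one, mul_one] at this
    have hmem : ∀ x : Vg g, x + ρ ∈ T' ↔ x ∈ T := by
      intro x
      have := happ x
      rw [hk] at this
      have h2 := Nat.eq_of_mul_eq_mul_left (kpos hT) this
      by_cases h3 : x + ρ ∈ T' <;> by_cases h4 : x ∈ T <;> simp [h3, h4] at h2 ⊢
    refine ⟨?_, hρ⟩
    ext y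
    have h5 := hmem (y + ρ)
    rw [add_assoc, Vg.add_self, add_zero] at h5
    rw [h5, AddSubgroup.add_mem_cancel_right T hρ]
  · rintro ⟨rfl, hρ⟩
    ext x
    rw [DD_apply, DD_apply]
    congr 1
    rw [add_zero]
    congr 1
    exact propext (AddSubgroup.add_mem_cancel_right T' hρ)

lemma PT_eq {g : ℕ} (T : AddSubgroup (Vg g)) :
    PT T = ∑ ρ : Vg g, monomial (DD T ρ) 1 := by
  classical
  unfold PT DD
  refine Finset.sum_congr rfl fun ρ _ => ?_
  have h1 : (∏ t ∈ Finset.univ.filter (fun t : Vg g => t ∈ T), (X (ρ + t) : MvPolynomial (Vg g) ℂ))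
      = monomial (∑ t ∈ Finset.univ.filter (fun t : Vg g => t ∈ T),
          Finsupp.single (ρ + t) 1) 1 := by
    rw [monomial_sum_one]
    refine Finset.prod_congr rfl fun t _ => ?_
    rw [X, ← X_pow_eq_monomial, pow_one]
  rw [h1, monomial_pow, one_pow]

lemma coeff_PT_ne {g : ℕ} {T T' : AddSubgroup (Vg g)} (hT : Nat.card T ≤ 4)
    (hT' : Nat.card T' ≤ 4) (h : T' ≠ T) : coeff (DD T 0) (PT T') = 0 := by
  classical
  rw [PT_eq, coeff_sum]
  refine Finset.sum_eq_zero fun ρ _ => ?_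
  rw [coeff_monomial, if_neg]
  intro hc
  exact h ((DD_eq_iff hT hT' ρ).mp hc).1

lemma coeff_PT_self {g : ℕ} {T : AddSubgroup (Vg g)} (hT : Nat.card T ≤ 4) :
    coeff (DD T 0) (PT T) ≠ 0 := by
  classical
  rw [PT_eq, coeff_sum]
  have h1 : ∀ ρ : Vg g, coeff (DD T 0) (monomial (DD T ρ) (1:ℂ)) = if ρ ∈ T then 1 else 0 := by
    intro ρ
    rw [coeff_monomial]
    by_cases h : ρ ∈ T
    · rw [if_pos ((DD_eq_iff hT hT ρ).mpr ⟨rfl, h⟩), if_pos h]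
    · rw [if_neg (fun hc => h ((DD_eq_iff hT hT ρ).mp hc).2), if_neg h]
  simp only [h1]
  rw [← Finset.sum_filter, Finset.sum_const, nsmul_eq_mul, mul_one]
  rw [Nat.cast_ne_zero]
  exact Finset.card_ne_zero_of_mem (Finset.mem_filter.mpr ⟨Finset.mem_univ _, T.zero_mem⟩)

lemma snoc_zero_injective (g : ℕ) :
    Function.Injective (fun σ : Vg g => (Fin.snoc σ (0 : ZMod 2) : Vg (g+1))) := by
  intro a b h
  have := congrArg Fin.init h
  simpa [Fin.init_snoc] using this

lemma coeff_ptilde {g : ℕ} {T T' : AddSubgroup (Vg g)} (hT : Nat.card T ≤ 4) :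
    coeff ((DD T 0).mapDomain (fun σ : Vg g => (Fin.snoc σ (0 : ZMod 2) : Vg (g+1))))
      (ptilde T') = coeff (DD T 0) (PT T') := by
  classical
  unfold ptilde
  rw [coeff_sub, coeff_rename_mapDomain _ (snoc_zero_injective g)]
  have h2 : coeff ((DD T 0).mapDomain (fun σ : Vg g => (Fin.snoc σ (0 : ZMod 2) : Vg (g+1))))
      (rename (fun σ : Vg g => Fin.snoc σ (1 : ZMod 2)) (PT T')) = 0 := by
    apply coeff_rename_eq_zero
    intro u hu
    exfalso
    have hr : (Fin.snoc (0 : Vg g) (0 : ZMod 2) : Vg (g+1)) ∉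
        Set.range (fun σ : Vg g => (Fin.snoc σ (1 : ZMod 2) : Vg (g+1))) := by
      rintro ⟨σ, hσ⟩
      have := congrFun hσ (Fin.last g)
      simp only [Fin.snoc_last] at this
      exact one_ne_zero this
    have h0 : (u.mapDomain (fun σ : Vg g => (Fin.snoc σ (1 : ZMod 2) : Vg (g+1))))
        (Fin.snoc (0 : Vg g) (0 : ZMod 2)) = 0 := Finsupp.mapDomain_notin_range _ _ hr
    rw [hu] at h0
    have h3 : ((DD T 0).mapDomain (fun σ : Vg g => (Fin.snoc σ (0 : ZMod 2) : Vg (g+1))))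
        (Fin.snoc (0 : Vg g) (0 : ZMod 2)) = DD T 0 0 :=
      Finsupp.mapDomain_apply (snoc_zero_injective g) _ _
    rw [h3] at h0
    rw [DD_apply] at h0
    rw [add_zero, if_pos T.zero_mem, mul_one] at h0
    exact (kpos hT).ne' h0
  rw [h2, sub_zero]

/-- The polynomials `p̃_{T,χ}`, as `T` ranges over the subgroups of `(ℤ/2ℤ)^g` of order at
most 4, are linearly independent; i.e. the substitution `p_T ↦ p̃_{T,χ}` is injective on the
linear span of the `p_T`. -/
theorem ptilde_linearIndependent (g : ℕ) :
    LinearIndependent ℂ (fun T : SmallSubgroup g => ptilde T.1) := by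
  classical
  rw [Fintype.linearIndependent_iff]
  intro c hc i
  have hcoeff := congrArg
    (coeff ((DD i.1 0).mapDomain (fun σ : Vg g => (Fin.snoc σ (0 : ZMod 2) : Vg (g+1))))) hc
  rw [coeff_sum] at hcoeff
  simp only [coeff_smul, coeff_ptilde i.2, coeff_zero] at hcoeff
  rw [Finset.sum_eq_single i] at hcoeff
  · have := coeff_PT_self i.2
    rcases mul_eq_zero.mp hcoeff with h | h
    · exact h
    · exact absurd h this
  · intro T _ hTi
    rw [coeff_PT_ne i.2 T.2 (fun h => hTi (Subtype.ext h)), smul_zero]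
  · intro h
    exact absurd (Finset.mem_univ i) h
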